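/- arXiv:2308.01075 — 4 statements merged into one kernel-verified Lean document; each statement's English description precedes it below -/
import Mathlib

section
/- Let G be an automorphism group of a 2-(v,k,λ) design with replication number r, with point orbits of sizes ω_1,…,ω_m, block orbits of sizes Ω_1,…,Ω_n, and orbit matrix entries γ_{ij}. Then for all 1 ≤ s,t ≤ m: Σ_{j=1}^n (ω_t/Ω_j)·γ_{sj}·γ_{tj} = λ·ω_t + δ_{st}·(r − λ). -/
/-!
Fix `x = rep s` and count pairs `(q, a)` with `q ∈ PO t` and `x, q ∈ B a`. As `G` is transitive on
`PO t` and on `BO j`, double counting the incidences between them gives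
`ω_t γ_{tj} = Ω_j · #(PO t ∩ B a₀)` for any `a₀ ∈ BO j`, and `#(PO t ∩ B a)` does not depend on
`a ∈ BO j`; so the `j`-th term counts the pairs with `a ∈ BO j`. Summed over `j`, each `q ≠ x`
contributes `λ` and `q = x` contributes `r`, and `x ∈ PO t` exactly when `s = t`.
-/

open Finset MulAction

section Orbits

variable {G γ : Type*} [Group G] [MulAction G γ]

lemma card_filter_comp_smul {S : Finset γ} {c : γ} (hS : (S : Set γ) = orbit G c) (g : G)
    (p : γ → Prop) [DecidablePred p] : #{d ∈ S | p (g • d)} = #{d ∈ S | p d} := by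
  have hmem : ∀ (h : G) {d}, d ∈ S → h • d ∈ S := fun h _ hd =>
    hS.symm.subset (mem_orbit_of_mem_orbit h (hS.subset hd))
  refine card_nbij' (g • ·) (g⁻¹ • ·) ?_ ?_ ?_ ?_
  · intro d hd
    simp only [coe_filter, Set.mem_ofPred_eq] at hd ⊢
    exact ⟨hmem g hd.1, hd.2⟩
  · intro d hd
    simp only [coe_filter, Set.mem_ofPred_eq, smul_inv_smul] at hd ⊢
    exact ⟨hmem g⁻¹ hd.1, hd.2⟩
  · intro d _
    exact inv_smul_smul g d
  · intro d _
    exact smul_inv_smul g d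

variable {α β : Type*} [DecidableEq α] [MulAction G α] [MulAction G β] {B : β → Finset α}
  (hB : ∀ (g : G) x a, g • x ∈ B (g • a) ↔ x ∈ B a)
include hB

lemma card_blocks_through_eq_of_mem_orbit {S : Finset β} {a₀ : β} (hS : (S : Set β) = orbit G a₀)
    {x y : α} (hy : y ∈ orbit G x) : #{a ∈ S | y ∈ B a} = #{a ∈ S | x ∈ B a} := by
  obtain ⟨g, rfl⟩ := hy
  rw [← card_filter_comp_smul hS g (g • x ∈ B ·)]
  simp only [hB]

lemma card_points_on_eq_of_mem_orbit {P : Finset α} {x : α} (hP : (P : Set α) = orbit G x)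
    {a b : β} (hb : b ∈ orbit G a) : #{q ∈ P | q ∈ B b} = #{q ∈ P | q ∈ B a} := by
  obtain ⟨g, rfl⟩ := hb
  rw [← card_filter_comp_smul hP g (· ∈ B (g • a))]
  simp only [hB]

lemma card_mul_card_blocks_through {P : Finset α} {S : Finset β} {x : α} {a₀ : β}
    (hP : (P : Set α) = orbit G x) (hS : (S : Set β) = orbit G a₀) :
    #P * #{a ∈ S | x ∈ B a} = #S * #{q ∈ P | q ∈ B a₀} :=
  card_mul_eq_card_mul (fun q a => q ∈ B a)
    (fun _ hq => card_blocks_through_eq_of_mem_orbit hB hS (hP.subset hq))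
    (fun _ ha => card_points_on_eq_of_mem_orbit hB hP (hS.subset ha))

lemma div_mul_card_blocks_through_mul_eq_sum {P : Finset α} {S : Finset β} {x : α} {a₀ : β}
    (hP : (P : Set α) = orbit G x) (hS : (S : Set β) = orbit G a₀) (y : α) :
    (#P : ℚ) / #S * #{a ∈ S | y ∈ B a} * #{a ∈ S | x ∈ B a} =
      ∑ a ∈ S with y ∈ B a, (#{q ∈ P | q ∈ B a} : ℚ) := by
  have hS₀ : (#S : ℚ) ≠ 0 := by
    have ha₀ : a₀ ∈ S := hS.symm.subset (mem_orbit_self a₀)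
    exact_mod_cast (card_pos.2 ⟨a₀, ha₀⟩).ne'
  have hflags : (#P : ℚ) * #{a ∈ S | x ∈ B a} = #S * #{q ∈ P | q ∈ B a₀} := by
    exact_mod_cast card_mul_card_blocks_through hB hP hS
  rw [sum_congr rfl fun a ha =>
    congrArg Nat.cast (card_points_on_eq_of_mem_orbit hB hP (hS.subset (mem_filter.1 ha).1)),
    sum_const, nsmul_eq_mul]
  field_simp
  linear_combination (#{a ∈ S | y ∈ B a} : ℚ) * hflags

end Orbits

section Partition

variable {β : Type*} [Fintype β] [DecidableEq β]

lemma sum_sum_filter_of_partition {ι M : Type*} [Fintype ι] [AddCommMonoid M]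
    (O : ι → Finset β) (hcov : ∀ a, ∃ j, a ∈ O j) (hdisj : ∀ j j', j ≠ j' → Disjoint (O j) (O j'))
    (p : β → Prop) [DecidablePred p] (f : β → M) :
    ∑ j, ∑ a ∈ O j with p a, f a = ∑ a with p a, f a := by
  have hunion : univ.biUnion O = univ :=
    eq_univ_of_forall fun a => mem_biUnion.2 (by simpa using hcov a)
  simp only [sum_filter]
  rw [← sum_biUnion fun j _ j' _ h => hdisj j j' h, hunion]

end Partition

section Design

variable {α β : Type*} [DecidableEq α] [Fintype β] (B : β → Finset α)

lemma sum_card_points_on_blocks_through (P : Finset α) (x : α) :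
    ∑ a with x ∈ B a, #{q ∈ P | q ∈ B a} = ∑ q ∈ P, #{a | x ∈ B a ∧ q ∈ B a} := by
  simpa [bipartiteAbove, bipartiteBelow, filter_filter] using
    sum_card_bipartiteAbove_eq_sum_card_bipartiteBelow (s := univ.filter (x ∈ B ·)) (t := P)
      (fun a q => q ∈ B a)

lemma sum_card_blocks_through_pair {lam r : ℕ}
    (hlam : ∀ p p' : α, p ≠ p' → #{a | p ∈ B a ∧ p' ∈ B a} = lam)
    (hr : ∀ p : α, #{a | p ∈ B a} = r) (P : Finset α) (x : α) :
    ∑ q ∈ P, (#{a | x ∈ B a ∧ q ∈ B a} : ℚ) = lam * #P + if x ∈ P then (r : ℚ) - lam else 0 := by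
  split_ifs with hx
  · rw [← add_sum_erase _ _ hx, sum_congr rfl fun q hq => by
      rw [hlam x q (ne_of_mem_erase hq).symm], sum_const, card_erase_of_mem hx]
    simp only [and_self, hr, nsmul_eq_mul]
    rw [Nat.cast_sub (card_pos.2 ⟨x, hx⟩)]
    ring
  · rw [sum_congr rfl fun q hq => by rw [hlam x q (ne_of_mem_of_not_mem hq hx).symm],
      sum_const, nsmul_eq_mul]
    ring

end Design

theorem stmt11_general (v b m n lam r : ℕ)
    (B : Fin b → Finset (Fin v))
    (hlam : ∀ p p' : Fin v, p ≠ p' →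
      (Finset.univ.filter (fun a => p ∈ B a ∧ p' ∈ B a)).card = lam)
    (hr : ∀ p : Fin v, (Finset.univ.filter (fun a => p ∈ B a)).card = r)
    (G : Subgroup (Equiv.Perm (Fin v)))
    (σ : G →* Equiv.Perm (Fin b))
    (hσ : ∀ (g : G) (a : Fin b), B (σ g a) = (B a).image (g : Equiv.Perm (Fin v)))
    (PO : Fin m → Finset (Fin v))
    (hPOorb : ∀ i, ∃ p, ∀ q, q ∈ PO i ↔ ∃ g : G, (g : Equiv.Perm (Fin v)) p = q)
    (hPOdisj : ∀ i i', i ≠ i' → Disjoint (PO i) (PO i'))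
    (BO : Fin n → Finset (Fin b))
    (hBOorb : ∀ j, ∃ a, ∀ c, c ∈ BO j ↔ ∃ g : G, σ g a = c)
    (hBOcov : ∀ a, ∃ j, a ∈ BO j)
    (hBOdisj : ∀ j j', j ≠ j' → Disjoint (BO j) (BO j'))
    (rep : Fin m → Fin v) (hrep : ∀ i, rep i ∈ PO i) :
    ∀ s t : Fin m,
      ∑ j, ((PO t).card : ℚ) / ((BO j).card : ℚ) *
          (((BO j).filter (fun a => rep s ∈ B a)).card : ℚ) *
          (((BO j).filter (fun a => rep t ∈ B a)).card : ℚ) =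
        (lam : ℚ) * ((PO t).card : ℚ) +
          (if s = t then ((r : ℚ) - (lam : ℚ)) else 0) := by
  intro s t
  let _ : MulAction G (Fin b) := MulAction.compHom _ σ
  have hB : ∀ (g : G) x a, g • x ∈ B (g • a) ↔ x ∈ B a := fun g x a =>
    (hσ g a).symm ▸ (g : Equiv.Perm (Fin v)).injective.mem_finset_image
  have hPt : (PO t : Set (Fin v)) = orbit G (rep t) := by
    obtain ⟨p, hp⟩ := hPOorb t
    have hPt : (PO t : Set (Fin v)) = orbit G p := Set.ext hp
    exact hPt.trans (orbit_eq_iff.2 (hPt.subset (hrep t))).symm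
  have hrep_mem : rep s ∈ PO t ↔ s = t := by
    refine ⟨fun h => ?_, fun h => h ▸ hrep s⟩
    by_contra hst
    exact disjoint_left.1 (hPOdisj s t hst) (hrep s) h
  calc _ = ∑ j, ∑ a ∈ BO j with rep s ∈ B a, (#{q ∈ PO t | q ∈ B a} : ℚ) := by
        refine sum_congr rfl fun j _ => ?_
        obtain ⟨a₀, ha₀⟩ := hBOorb j
        exact div_mul_card_blocks_through_mul_eq_sum hB hPt (Set.ext ha₀) (rep s)
    _ = ∑ a with rep s ∈ B a, (#{q ∈ PO t | q ∈ B a} : ℚ) :=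
        sum_sum_filter_of_partition BO hBOcov hBOdisj _ _
    _ = ∑ q ∈ PO t, (#{a | rep s ∈ B a ∧ q ∈ B a} : ℚ) := by
        exact_mod_cast sum_card_points_on_blocks_through B (PO t) (rep s)
    _ = _ := by
        simp only [sum_card_blocks_through_pair B hlam hr, hrep_mem]

/-- For an automorphism group of a 2-(v,k,λ) design with replication number `r`,
orbit matrix entries `γ_{ij}` satisfy, for all `s, t`:
`∑_j (ω_t/Ω_j)·γ_{sj}·γ_{tj} = λ·ω_t + δ_{st}·(r − λ)`. -/
theorem stmt11 (v b m n k lam r : ℕ)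
    (B : Fin b → Finset (Fin v))
    (hk : ∀ a, (B a).card = k)
    (hlam : ∀ p p' : Fin v, p ≠ p' →
      (Finset.univ.filter (fun a => p ∈ B a ∧ p' ∈ B a)).card = lam)
    (hr : ∀ p : Fin v, (Finset.univ.filter (fun a => p ∈ B a)).card = r)
    (G : Subgroup (Equiv.Perm (Fin v)))
    (σ : G →* Equiv.Perm (Fin b))
    (hσ : ∀ (g : G) (a : Fin b), B (σ g a) = (B a).image (g : Equiv.Perm (Fin v)))
    (PO : Fin m → Finset (Fin v))
    (hPOorb : ∀ i, ∃ p, ∀ q, q ∈ PO i ↔ ∃ g : G, (g : Equiv.Perm (Fin v)) p = q)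
    (hPOcov : ∀ p, ∃ i, p ∈ PO i)
    (hPOdisj : ∀ i i', i ≠ i' → Disjoint (PO i) (PO i'))
    (BO : Fin n → Finset (Fin b))
    (hBOorb : ∀ j, ∃ a, ∀ c, c ∈ BO j ↔ ∃ g : G, σ g a = c)
    (hBOcov : ∀ a, ∃ j, a ∈ BO j)
    (hBOdisj : ∀ j j', j ≠ j' → Disjoint (BO j) (BO j'))
    (rep : Fin m → Fin v) (hrep : ∀ i, rep i ∈ PO i) :
    ∀ s t : Fin m,
      ∑ j, ((PO t).card : ℚ) / ((BO j).card : ℚ) *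
          (((BO j).filter (fun a => rep s ∈ B a)).card : ℚ) *
          (((BO j).filter (fun a => rep t ∈ B a)).card : ℚ) =
        (lam : ℚ) * ((PO t).card : ℚ) +
          (if s = t then ((r : ℚ) - (lam : ℚ)) else 0) :=
  stmt11_general v b m n lam r B hlam hr G σ hσ PO hPOorb hPOdisj BO hBOorb hBOcov hBOdisj rep hrep
end

section
/- Let D be a quasi-symmetric 2-design with block intersection numbers x < y, G an automorphism group with point orbits of sizes ω_i and block orbits of sizes Ω_j, γ_{ij} the point orbit matrix entries, and r_{jj'} the number of blocks in block orbit B_{j'} meeting a fixed representative block of B_j in y points (for j = j', not counting the block itself when counting self-intersection). Then (1/Ω_j)·Σ_{i=1}^m ω_i·γ_{ij}·γ_{ij'} = r_{jj'}(y−x) + Ω_{j'}·x + (k−x)·δ_{jj'}. -/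
/-!
Count the flags `(P, B, B')` with `B ∈ B_j`, `B' ∈ B_{j'}` and `P ∈ B ∩ B'` in two ways. Grouped
by points, and then by point orbits (on which the number of blocks of a block orbit through `P`
is constant), they give `Σ_i ω_i γ_{ij} γ_{ij'}`. Grouped by blocks they give
`Σ_{B ∈ B_j} Σ_{B' ∈ B_{j'}} |B ∩ B'|`; by quasi-symmetry the inner sum is
`r(y - x) + Ω_{j'} x + δ_{jj'} (k - x)` with `r` the number of `B' ≠ B` meeting `B` in `y`
points, and `r` does not depend on the choice of `B` in its orbit since `G` preserves
intersection sizes.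
-/

open Finset Pointwise MulAction Function

def IsOrbit (G : Type*) {X : Type*} [SMul G X] (O : Finset X) : Prop :=
  ∃ x, ∀ y, y ∈ O ↔ y ∈ orbit G x

namespace IsOrbit

variable {G X : Type*} [Group G] [MulAction G X] {O : Finset X}

theorem mem_iff_mem_orbit_of_mem (hO : IsOrbit G O) {r : X} (hr : r ∈ O) :
    ∀ y, y ∈ O ↔ y ∈ orbit G r := by
  obtain ⟨x, hx⟩ := hO
  rw [orbit_eq_iff.mpr ((hx r).mp hr)]
  exact hx

theorem exists_smul_eq (hO : IsOrbit G O) {r y : X} (hr : r ∈ O) (hy : y ∈ O) :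
    ∃ g : G, g • r = y :=
  mem_orbit_iff.mp ((hO.mem_iff_mem_orbit_of_mem hr y).mp hy)

theorem smul_mem (hO : IsOrbit G O) (g : G) {y : X} (hy : y ∈ O) : g • y ∈ O :=
  (hO.mem_iff_mem_orbit_of_mem hy _).mpr (mem_orbit y g)

end IsOrbit

theorem sum_eq_sum_card_nsmul_of_partition {X ι M : Type*} [Fintype X] [Fintype ι]
    [AddCommMonoid M] (O : ι → Finset X) (hcov : ∀ x, ∃ i, x ∈ O i)
    (hdisj : Pairwise (Disjoint on O)) (r : ι → X) (f : X → M)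
    (hf : ∀ i, ∀ y ∈ O i, f y = f (r i)) :
    ∑ x, f x = ∑ i, #(O i) • f (r i) := by
  classical
  have huniv : (univ : Finset X) = univ.biUnion O := by
    ext x
    simpa using hcov x
  rw [huniv, sum_biUnion (hdisj.set_pairwise _)]
  exact sum_congr rfl fun i _ => (sum_congr rfl (hf i)).trans (sum_const _)

theorem sum_card_filter_mem_mul_card_filter_mem {X Y : Type*} [Fintype X] [DecidableEq X]
    (B : Y → Finset X) (S T : Finset Y) :
    ∑ p, #{a ∈ S | p ∈ B a} * #{c ∈ T | p ∈ B c} = ∑ a ∈ S, ∑ c ∈ T, #(B a ∩ B c) := by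
  have hinter : ∀ a c,
      #(B a ∩ B c) = ∑ p, (if p ∈ B a then 1 else 0) * (if p ∈ B c then 1 else 0) := by
    intro a c
    simp only [ite_zero_mul_ite_zero, mul_one, ← mem_inter, ← card_filter, filter_mem_eq_inter,
      univ_inter]
  simp only [card_filter, sum_mul_sum, hinter]
  rw [sum_comm]
  exact sum_congr rfl fun a _ => sum_comm

theorem sum_card_inter_of_quasiSymmetric {X Y : Type*} [DecidableEq X] [DecidableEq Y]
    {k x y : ℕ} (B : Y → Finset X) (hk : ∀ a, #(B a) = k)
    (hqs : ∀ a a', a ≠ a' → #(B a ∩ B a') = x ∨ #(B a ∩ B a') = y) (hxy : x ≠ y)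
    (T : Finset Y) (a : Y) :
    ∑ c ∈ T, (#(B a ∩ B c) : ℚ) =
      #{c ∈ T | c ≠ a ∧ #(B c ∩ B a) = y} * ((y : ℚ) - x) + #T * (x : ℚ) +
        if a ∈ T then (k : ℚ) - x else 0 := by
  have hterm : ∀ c ∈ T, (#(B a ∩ B c) : ℚ) =
      (if c ≠ a ∧ #(B c ∩ B a) = y then 1 else 0) * ((y : ℚ) - x) + x +
        if a = c then (k : ℚ) - x else 0 := by
    intro c _
    rw [inter_comm]
    by_cases hca : c = a
    · subst hca
      simp [hk]
    · rcases hqs c a hca with h | h <;> simp [h, hca, Ne.symm hca, hxy]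
  rw [sum_congr rfl hterm, sum_add_distrib, sum_add_distrib, ← sum_mul, sum_boole, sum_const,
    nsmul_eq_mul, sum_ite_eq]

section Equivariant

variable {G X Y : Type*} [Group G] [MulAction G X] [MulAction G Y]

theorem card_filter_smul_left_eq (O : Finset Y) (hO : ∀ g : G, ∀ c ∈ O, g • c ∈ O)
    (R : X → Y → Prop) [∀ x c, Decidable (R x c)]
    (hR : ∀ (g : G) x c, R (g • x) (g • c) ↔ R x c) (g : G) (x : X) :
    #{c ∈ O | R (g • x) c} = #{c ∈ O | R x c} := by
  refine card_nbij' (g⁻¹ • ·) (g • ·) ?_ ?_ ?_ ?_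
  · intro c hc
    simp only [mem_coe, mem_filter] at hc ⊢
    exact ⟨hO _ _ hc.1, by rw [← hR g, smul_inv_smul]; exact hc.2⟩
  · intro c hc
    simp only [mem_coe, mem_filter] at hc ⊢
    exact ⟨hO _ _ hc.1, (hR g x c).mpr hc.2⟩
  · intro c _
    exact smul_inv_smul g c
  · intro c _
    exact inv_smul_smul g c

variable [DecidableEq X] {B : Y → Finset X} (hB : ∀ (g : G) c, B (g • c) = g • B c)
include hB

theorem card_filter_smul_mem_eq (O : Finset Y) (hO : ∀ g : G, ∀ c ∈ O, g • c ∈ O)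
    (g : G) (p : X) : #{c ∈ O | g • p ∈ B c} = #{c ∈ O | p ∈ B c} :=
  card_filter_smul_left_eq O hO (fun p c => p ∈ B c)
    (fun g p c => by simp only [hB, smul_mem_smul_finset_iff]) g p

theorem card_inter_smul (g : G) (a c : Y) : #(B (g • a) ∩ B (g • c)) = #(B a ∩ B c) := by
  rw [hB, hB, ← smul_finset_inter, card_smul_finset]

theorem card_filter_ne_smul_eq [DecidableEq Y] (O : Finset Y)
    (hO : ∀ g : G, ∀ c ∈ O, g • c ∈ O) (y : ℕ) (g : G) (a : Y) :
    #{c ∈ O | c ≠ g • a ∧ #(B c ∩ B (g • a)) = y} = #{c ∈ O | c ≠ a ∧ #(B c ∩ B a) = y} :=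
  card_filter_smul_left_eq O hO (fun a c => c ≠ a ∧ #(B c ∩ B a) = y)
    (fun g a c => by simp only [ne_eq, smul_left_cancel_iff, card_inter_smul hB]) g a

end Equivariant

theorem stmt12_general (v b m n k x y : ℕ) (hxy : x < y)
    (B : Fin b → Finset (Fin v))
    (hk : ∀ a, (B a).card = k)
    (hqs : ∀ a a', a ≠ a' → (B a ∩ B a').card = x ∨ (B a ∩ B a').card = y)
    (G : Subgroup (Equiv.Perm (Fin v)))
    (σ : G →* Equiv.Perm (Fin b))
    (hσ : ∀ (g : G) (a : Fin b), B (σ g a) = (B a).image (g : Equiv.Perm (Fin v)))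
    (PO : Fin m → Finset (Fin v))
    (hPOorb : ∀ i, ∃ p, ∀ q, q ∈ PO i ↔ ∃ g : G, (g : Equiv.Perm (Fin v)) p = q)
    (hPOcov : ∀ p, ∃ i, p ∈ PO i)
    (hPOdisj : ∀ i i', i ≠ i' → Disjoint (PO i) (PO i'))
    (BO : Fin n → Finset (Fin b))
    (hBOorb : ∀ j, ∃ a, ∀ c, c ∈ BO j ↔ ∃ g : G, σ g a = c)
    (hBOdisj : ∀ j j', j ≠ j' → Disjoint (BO j) (BO j'))
    (rep : Fin m → Fin v) (hrep : ∀ i, rep i ∈ PO i)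
    (repB : Fin n → Fin b) (hrepB : ∀ j, repB j ∈ BO j) :
    ∀ j j' : Fin n,
      (1 / ((BO j).card : ℚ)) *
          ∑ i, ((PO i).card : ℚ) *
            (((BO j).filter (fun a => rep i ∈ B a)).card : ℚ) *
            (((BO j').filter (fun a => rep i ∈ B a)).card : ℚ) =
        (((BO j').filter (fun a => a ≠ repB j ∧ (B a ∩ B (repB j)).card = y)).card : ℚ) *
            ((y : ℚ) - (x : ℚ)) +
          ((BO j').card : ℚ) * (x : ℚ) +
          (if j = j' then ((k : ℚ) - (x : ℚ)) else 0) := by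
  intro j j'
  let _ : MulAction G (Fin b) := MulAction.compHom _ σ
  have hB : ∀ (g : G) a, B (g • a) = g • B a := hσ
  have hPO : ∀ i, IsOrbit G (PO i) := hPOorb
  have hBO : ∀ j, IsOrbit G (BO j) := hBOorb
  have hγ : ∀ i, ∀ p ∈ PO i, #{a ∈ BO j | p ∈ B a} * #{a ∈ BO j' | p ∈ B a} =
      #{a ∈ BO j | rep i ∈ B a} * #{a ∈ BO j' | rep i ∈ B a} := by
    intro i p hp
    obtain ⟨g, rfl⟩ := (hPO i).exists_smul_eq (hrep i) hp
    rw [card_filter_smul_mem_eq hB _ fun g _ => (hBO j).smul_mem g,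
      card_filter_smul_mem_eq hB _ fun g _ => (hBO j').smul_mem g]
  have hflags : ∑ i, #(PO i) * (#{a ∈ BO j | rep i ∈ B a} * #{a ∈ BO j' | rep i ∈ B a}) =
      ∑ a ∈ BO j, ∑ c ∈ BO j', #(B a ∩ B c) := by
    rw [← sum_card_filter_mem_mul_card_filter_mem,
      sum_eq_sum_card_nsmul_of_partition PO hPOcov hPOdisj rep _ hγ]
    simp only [smul_eq_mul]
  have hinner : ∀ a ∈ BO j, ∑ c ∈ BO j', (#(B a ∩ B c) : ℚ) =
      #{c ∈ BO j' | c ≠ repB j ∧ #(B c ∩ B (repB j)) = y} * ((y : ℚ) - x) +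
        #(BO j') * (x : ℚ) + if j = j' then (k : ℚ) - x else 0 := by
    intro a ha
    have hdelta : a ∈ BO j' ↔ j = j' :=
      ⟨fun ha' => by_contra fun hne => disjoint_left.mp (hBOdisj j j' hne) ha ha', (· ▸ ha)⟩
    obtain ⟨g, rfl⟩ := (hBO j).exists_smul_eq (hrepB j) ha
    rw [sum_card_inter_of_quasiSymmetric B hk hqs hxy.ne,
      card_filter_ne_smul_eq hB _ (fun g _ => (hBO j').smul_mem g)]
    simp only [hdelta]
  have hΩ : (#(BO j) : ℚ) ≠ 0 := Nat.cast_ne_zero.mpr (card_ne_zero_of_mem (hrepB j))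
  have hcast := congrArg (Nat.cast : ℕ → ℚ) hflags
  push_cast at hcast
  simp only [mul_assoc, hcast, sum_congr rfl hinner, sum_const, nsmul_eq_mul]
  field_simp

/-- Orbit matrix identity (equation (5)) for a quasi-symmetric design with block
intersection numbers `x < y`:
`(1/Ω_j) Σ_i ω_i γ_{ij} γ_{ij'} = r_{jj'}(y−x) + Ω_{j'} x + (k−x) δ_{jj'}`,
where `r_{jj'}` is the number of blocks of block orbit `j'` (other than the chosen
representative block of orbit `j`) meeting that representative in `y` points. -/
theorem stmt12 (v b m n k lam x y : ℕ) (hxy : x < y)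
    (B : Fin b → Finset (Fin v))
    (hk : ∀ a, (B a).card = k)
    (hlam : ∀ p p' : Fin v, p ≠ p' →
      (Finset.univ.filter (fun a => p ∈ B a ∧ p' ∈ B a)).card = lam)
    (hqs : ∀ a a', a ≠ a' → (B a ∩ B a').card = x ∨ (B a ∩ B a').card = y)
    (G : Subgroup (Equiv.Perm (Fin v)))
    (σ : G →* Equiv.Perm (Fin b))
    (hσ : ∀ (g : G) (a : Fin b), B (σ g a) = (B a).image (g : Equiv.Perm (Fin v)))
    (PO : Fin m → Finset (Fin v))
    (hPOorb : ∀ i, ∃ p, ∀ q, q ∈ PO i ↔ ∃ g : G, (g : Equiv.Perm (Fin v)) p = q)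
    (hPOcov : ∀ p, ∃ i, p ∈ PO i)
    (hPOdisj : ∀ i i', i ≠ i' → Disjoint (PO i) (PO i'))
    (BO : Fin n → Finset (Fin b))
    (hBOorb : ∀ j, ∃ a, ∀ c, c ∈ BO j ↔ ∃ g : G, σ g a = c)
    (hBOcov : ∀ a, ∃ j, a ∈ BO j)
    (hBOdisj : ∀ j j', j ≠ j' → Disjoint (BO j) (BO j'))
    (rep : Fin m → Fin v) (hrep : ∀ i, rep i ∈ PO i)
    (repB : Fin n → Fin b) (hrepB : ∀ j, repB j ∈ BO j) :
    ∀ j j' : Fin n,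
      (1 / ((BO j).card : ℚ)) *
          ∑ i, ((PO i).card : ℚ) *
            (((BO j).filter (fun a => rep i ∈ B a)).card : ℚ) *
            (((BO j').filter (fun a => rep i ∈ B a)).card : ℚ) =
        (((BO j').filter (fun a => a ≠ repB j ∧ (B a ∩ B (repB j)).card = y)).card : ℚ) *
            ((y : ℚ) - (x : ℚ)) +
          ((BO j').card : ℚ) * (x : ℚ) +
          (if j = j' then ((k : ℚ) - (x : ℚ)) else 0) :=
  stmt12_general v b m n k x y hxy B hk hqs G σ hσ PO hPOorb hPOcov hPOdisj BO hBOorb hBOdisj rep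
    hrep repB hrepB
end

section
/- Let D be a quasi-symmetric design of Blokhuis-Haemers type with parameters 2-(q³, q²(q−1)/2, q(q³−q²−2)/4) where q is a power of 2, q ≥ 2, and let G be an automorphism group acting with f fixed points, h fixed blocks, and all other orbits of size 2. Then the binary code spanned by the rows of the non-fixed part of the point orbit matrix is self-orthogonal; moreover if q ≥ 4 the code is doubly even. -/
/-
Counting the flags between a point orbit `O` and a block orbit `C` in two ways gives
`#C * #(O ∩ B a) = #O * γ`, where `γ` is the number of blocks of `C` through a point of `O`.
For point orbits `O`, `O'` of size 2, summing `#(O ∩ B a) * #(O' ∩ B a)` over all blocks then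
yields the orbit matrix identity
`∑_{fixed} 2 γ γ' + ∑_{non-fixed} γ γ' = 2λ + δ (r - λ)`.
As `r - λ = q³(q + 1)/4` is even, the non-fixed rows are pairwise orthogonal mod 2. On the
diagonal, `γ ≤ 1` on fixed and `γ ≤ 2` on non-fixed block orbits; comparing with the row sum
`∑ γ = r` shows that a non-fixed row has exactly `r - λ` entries equal to 1, a multiple of 4
once `q ≥ 4`. Finally, a self-orthogonal binary code spanned by words of weight divisible by 4
is doubly even, since `wt (u + v) = wt u + wt v - 2 |supp u ∩ supp v|`.
-/

open Finset Pointwise MulAction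

section

variable {ι : Type*} [Fintype ι]

lemma hammingNorm_add_add_two_mul_card (u v : ι → ZMod 2) :
    hammingNorm (u + v) + 2 * #{j | u j = 1 ∧ v j = 1} = hammingNorm u + hammingNorm v := by
  have key : ∀ x y : ZMod 2,
      ((if x + y ≠ 0 then 1 else 0) + 2 * if x = 1 ∧ y = 1 then 1 else 0) =
        (if x ≠ 0 then 1 else 0) + (if y ≠ 0 then 1 else 0 : ℕ) := by
    decide
  simp only [hammingNorm, card_filter, mul_sum, ← sum_add_distrib, Pi.add_apply]
  exact sum_congr rfl fun j _ => key (u j) (v j)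

lemma natCast_card_eq_dotProduct (u v : ι → ZMod 2) :
    (#{j | u j = 1 ∧ v j = 1} : ZMod 2) = u ⬝ᵥ v := by
  have key : ∀ x y : ZMod 2, ((if x = 1 ∧ y = 1 then 1 else 0 : ℕ) : ZMod 2) = x * y := by
    decide
  rw [card_filter, Nat.cast_sum, dotProduct]
  exact sum_congr rfl fun j _ => key (u j) (v j)

lemma dotProduct_eq_zero_of_mem_span {R : Type*} [CommSemiring R] {S : Set (ι → R)}
    (hS : ∀ x ∈ S, ∀ y ∈ S, x ⬝ᵥ y = 0) {u w : ι → R}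
    (hu : u ∈ Submodule.span R S) (hw : w ∈ Submodule.span R S) : u ⬝ᵥ w = 0 := by
  have hSw : ∀ x ∈ S, x ⬝ᵥ w = 0 := fun x hx => by
    induction hw using Submodule.span_induction with
    | mem y hy => exact hS x hx y hy
    | zero => exact dotProduct_zero x
    | add y z _ _ hy hz => rw [dotProduct_add, hy, hz, add_zero]
    | smul c y _ hy => rw [dotProduct_smul, hy, smul_zero]
  induction hu using Submodule.span_induction with
  | mem x hx => exact hSw x hx
  | zero => exact zero_dotProduct w
  | add x z _ _ hx hz => rw [add_dotProduct, hx, hz, add_zero]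
  | smul c x _ hx => rw [smul_dotProduct, hx, smul_zero]

lemma four_dvd_hammingNorm_of_mem_span {S : Set (ι → ZMod 2)}
    (hS : ∀ x ∈ S, ∀ y ∈ S, x ⬝ᵥ y = 0) (hS4 : ∀ x ∈ S, 4 ∣ hammingNorm x)
    {u : ι → ZMod 2} (hu : u ∈ Submodule.span (ZMod 2) S) : 4 ∣ hammingNorm u := by
  induction hu using Submodule.span_induction with
  | mem x hx => exact hS4 x hx
  | zero => simp
  | add x y hx hy ihx ihy =>
    have hxy : 2 ∣ #{j | x j = 1 ∧ y j = 1} := by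
      rw [← ZMod.natCast_eq_zero_iff, natCast_card_eq_dotProduct,
        dotProduct_eq_zero_of_mem_span hS hx hy]
    have := hammingNorm_add_add_two_mul_card x y
    omega
  | smul c x _ ih =>
    obtain rfl | rfl : c = 0 ∨ c = 1 := by revert c; decide
    · simp
    · simpa

lemma natCast_sum_two_div_mul (c f : ι → ℕ) (hc : ∀ j, c j = 1 ∨ c j = 2) :
    ((∑ j, 2 / c j * f j : ℕ) : ZMod 2) = ∑ j : {j // c j = 2}, (f j : ZMod 2) := by
  rw [← sum_subtype (univ.filter (c · = 2)) (by simp) (fun j => (f j : ZMod 2)), sum_filter,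
    Nat.cast_sum]
  refine sum_congr rfl fun j _ => ?_
  rcases hc j with h | h
  · simp [h, show (2 : ZMod 2) = 0 from rfl]
  · simp [h]

lemma hammingNorm_natCast_eq_card {c γ : ι → ℕ} (hγ : ∀ j, c j = 2 → γ j ≤ 2) :
    hammingNorm (fun j : {j // c j = 2} => (γ j : ZMod 2)) = #{j | c j = 2 ∧ γ j = 1} := by
  rw [hammingNorm, card_filter, card_filter, ← sum_subtype (univ.filter (c · = 2)) (by simp)
    (fun j => if (γ j : ZMod 2) ≠ 0 then 1 else 0), sum_filter]
  refine sum_congr rfl fun j _ => ?_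
  by_cases h : c j = 2
  · have := hγ j h
    interval_cases γ j <;> simp [h, show (2 : ZMod 2) = 0 from rfl]
  · simp [h]

lemma sum_two_div_mul_self_add_card (c γ : ι → ℕ) (hc : ∀ j, c j = 1 ∨ c j = 2)
    (hγ : ∀ j, γ j ≤ c j) :
    ∑ j, 2 / c j * (γ j * γ j) + #{j | c j = 2 ∧ γ j = 1} = 2 * ∑ j, γ j := by
  rw [card_filter, mul_sum, ← sum_add_distrib]
  refine sum_congr rfl fun j _ => ?_
  have := hγ j
  rcases hc j with h | h <;> rw [h] at this ⊢ <;> interval_cases γ j <;> simp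

end

section Incidence

variable {P K : Type*} [DecidableEq P] (B : K → Finset P)

def incidenceCount (C : Finset K) (x : P) : ℕ := #{c ∈ C | x ∈ B c}

variable {B}

lemma incidenceCount_le_card (C : Finset K) (x : P) : incidenceCount B C x ≤ #C :=
  card_filter_le _ _

lemma sum_card_inter_eq_sum_incidenceCount (O : Finset P) (C : Finset K) :
    ∑ c ∈ C, #(O ∩ B c) = ∑ x ∈ O, incidenceCount B C x := by
  simp only [← filter_mem_eq_inter]
  exact sum_card_bipartiteAbove_eq_sum_card_bipartiteBelow (fun c x => x ∈ B c)

variable [Fintype K]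

lemma sum_eq_sum_sum_of_cover {M ι : Type*} [AddCommMonoid M] [Fintype ι] [DecidableEq K]
    (BO : ι → Finset K) (hcov : ∀ a, ∃ j, a ∈ BO j)
    (hdisj : ∀ j j', j ≠ j' → Disjoint (BO j) (BO j')) (f : K → M) :
    ∑ a, f a = ∑ j, ∑ a ∈ BO j, f a := by
  have hunion : univ.biUnion BO = univ :=
    eq_univ_of_forall fun a => mem_biUnion.2 ((hcov a).imp fun j hj => ⟨mem_univ j, hj⟩)
  rw [← sum_biUnion fun j _ j' _ h => hdisj j j' h, hunion]

lemma sum_incidenceCount_eq_card {ι : Type*} [Fintype ι] [DecidableEq K]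
    (BO : ι → Finset K) (hcov : ∀ a, ∃ j, a ∈ BO j)
    (hdisj : ∀ j j', j ≠ j' → Disjoint (BO j) (BO j')) (x : P) :
    ∑ j, incidenceCount B (BO j) x = #{a | x ∈ B a} := by
  simp only [incidenceCount, card_filter]
  exact (sum_eq_sum_sum_of_cover BO hcov hdisj _).symm

lemma sum_card_inter_mul_card_inter (X Y : Finset P) :
    ∑ a, #(X ∩ B a) * #(Y ∩ B a) = ∑ x ∈ X, ∑ y ∈ Y, #{a | x ∈ B a ∧ y ∈ B a} := by
  simp only [← filter_mem_eq_inter, card_filter, sum_mul_sum, ite_zero_mul_ite_zero, mul_one]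
  rw [sum_comm]
  exact sum_congr rfl fun x _ => sum_comm

lemma sum_sum_card_filter_of_disjoint {X Y : Finset P} (hXY : Disjoint X Y) {l : ℕ}
    (hl : ∀ p p', p ≠ p' → #{a | p ∈ B a ∧ p' ∈ B a} = l) :
    ∑ x ∈ X, ∑ y ∈ Y, #{a | x ∈ B a ∧ y ∈ B a} = #X * #Y * l := by
  have hne : ∀ x ∈ X, ∀ y ∈ Y, x ≠ y := fun x hx y hy h => disjoint_left.1 hXY hx (h ▸ hy)
  rw [sum_congr rfl fun x hx => sum_congr rfl fun y hy => hl x y (hne x hx y hy)]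
  simp only [sum_const, smul_eq_mul, mul_assoc]

lemma sum_sum_card_filter_self (X : Finset P) {l r : ℕ}
    (hl : ∀ p p', p ≠ p' → #{a | p ∈ B a ∧ p' ∈ B a} = l) (hr : ∀ p, #{a | p ∈ B a} = r) :
    ∑ x ∈ X, ∑ y ∈ X, #{a | x ∈ B a ∧ y ∈ B a} = #X * (r + (#X - 1) * l) := by
  have hrow : ∀ x ∈ X, ∑ y ∈ X, #{a | x ∈ B a ∧ y ∈ B a} = r + (#X - 1) * l := by
    intro x hx
    rw [← add_sum_erase X _ hx]
    simp only [and_self]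
    rw [hr, sum_congr rfl fun y hy => hl x y (ne_of_mem_erase hy).symm, sum_const,
      card_erase_of_mem hx, smul_eq_mul]
  rw [sum_congr rfl hrow, sum_const, smul_eq_mul]

end Incidence

section OrbitCounting

variable {G P K : Type*} [Group G] [MulAction G P] [MulAction G K] [DecidableEq P]
  {B : K → Finset P}

lemma smul_finset_eq_self_of_coe_eq_orbit {α : Type*} [MulAction G α] [DecidableEq α]
    {O : Finset α} {x : α} (hO : (O : Set α) = orbit G x) (g : G) : g • O = O :=
  coe_injective (by rw [coe_smul_finset, hO, smul_orbit])

lemma coe_eq_orbit_of_mem {α : Type*} [MulAction G α] {O : Finset α} {x y : α}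
    (hO : (O : Set α) = orbit G x) (hy : y ∈ O) : (O : Set α) = orbit G y :=
  hO.trans (orbit_eq_iff.2 (hO ▸ mem_coe.2 hy)).symm

lemma incidenceCount_smul [DecidableEq K] (hB : ∀ (g : G) a, B (g • a) = g • B a)
    {C : Finset K} (hC : ∀ g : G, g • C = C) (g : G) (x : P) :
    incidenceCount B C (g • x) = incidenceCount B C x := by
  have himage : {c ∈ C | g • x ∈ B c} = g • {c ∈ C | x ∈ B c} := by
    ext c
    obtain ⟨c, rfl⟩ : ∃ c', g • c' = c := ⟨g⁻¹ • c, smul_inv_smul g c⟩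
    rw [smul_mem_smul_finset_iff, mem_filter, mem_filter, hB, smul_mem_smul_finset_iff,
      ← hC g, smul_mem_smul_finset_iff, hC g]
  rw [incidenceCount, himage, card_smul_finset, incidenceCount]

lemma card_inter_smul_s16 (hB : ∀ (g : G) a, B (g • a) = g • B a) {O : Finset P}
    (hO : ∀ g : G, g • O = O) (g : G) (a : K) : #(O ∩ B (g • a)) = #(O ∩ B a) := by
  rw [hB, ← card_smul_finset g (O ∩ B a), smul_finset_inter, hO]

lemma card_mul_card_inter_eq [DecidableEq K] (hB : ∀ (g : G) a, B (g • a) = g • B a)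
    {O : Finset P} {C : Finset K} {x : P} {a : K} (hO : (O : Set P) = orbit G x)
    (hC : (C : Set K) = orbit G a) : #C * #(O ∩ B a) = #O * incidenceCount B C x := by
  have hblocks : ∀ c ∈ C, #(O ∩ B c) = #(O ∩ B a) := fun c hc => by
    obtain ⟨g, rfl⟩ := mem_orbit_iff.1 (hC ▸ mem_coe.2 hc)
    exact card_inter_smul_s16 hB (smul_finset_eq_self_of_coe_eq_orbit hO) g a
  have hpoints : ∀ y ∈ O, incidenceCount B C y = incidenceCount B C x := fun y hy => by
    obtain ⟨g, rfl⟩ := mem_orbit_iff.1 (hO ▸ mem_coe.2 hy)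
    exact incidenceCount_smul hB (smul_finset_eq_self_of_coe_eq_orbit hC) g x
  calc #C * #(O ∩ B a) = ∑ c ∈ C, #(O ∩ B c) := by
        rw [sum_congr rfl hblocks, sum_const, smul_eq_mul]
    _ = ∑ y ∈ O, incidenceCount B C y := sum_card_inter_eq_sum_incidenceCount O C
    _ = #O * incidenceCount B C x := by rw [sum_congr rfl hpoints, sum_const, smul_eq_mul]

lemma card_mul_sum_card_inter_mul_card_inter [DecidableEq K]
    (hB : ∀ (g : G) a, B (g • a) = g • B a) {O O' : Finset P} {C : Finset K} {x y : P} {a : K}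
    (hO : (O : Set P) = orbit G x) (hO' : (O' : Set P) = orbit G y)
    (hC : (C : Set K) = orbit G a) :
    #C * ∑ c ∈ C, #(O ∩ B c) * #(O' ∩ B c) =
      #O * #O' * (incidenceCount B C x * incidenceCount B C y) := by
  have hconst : ∀ c ∈ C, #(O ∩ B c) * #(O' ∩ B c) = #(O ∩ B a) * #(O' ∩ B a) :=
    fun c hc => by
    obtain ⟨g, rfl⟩ := mem_orbit_iff.1 (hC ▸ mem_coe.2 hc)
    rw [card_inter_smul_s16 hB (smul_finset_eq_self_of_coe_eq_orbit hO),
      card_inter_smul_s16 hB (smul_finset_eq_self_of_coe_eq_orbit hO')]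
  calc #C * ∑ c ∈ C, #(O ∩ B c) * #(O' ∩ B c)
      = (#C * #(O ∩ B a)) * (#C * #(O' ∩ B a)) := by
        rw [sum_congr rfl hconst, sum_const, smul_eq_mul]; ring
    _ = _ := by rw [card_mul_card_inter_eq hB hO hC, card_mul_card_inter_eq hB hO' hC]; ring

-- `2 / #(BO j)` is the weight of a block orbit in the orbit matrix identity: 2 for a fixed
-- block and 1 for an orbit of size 2.
lemma two_mul_sum_orbit_incidence_mul [Fintype K] [DecidableEq K] {ι : Type*} [Fintype ι]
    (hB : ∀ (g : G) a, B (g • a) = g • B a) (BO : ι → Finset K)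
    (hBO : ∀ j, ∃ a, (BO j : Set K) = orbit G a) (hsize : ∀ j, #(BO j) = 1 ∨ #(BO j) = 2)
    (hcov : ∀ a, ∃ j, a ∈ BO j) (hdisj : ∀ j j', j ≠ j' → Disjoint (BO j) (BO j'))
    {O O' : Finset P} {x y : P} (hO : (O : Set P) = orbit G x) (hO' : (O' : Set P) = orbit G y)
    (h2 : #O = 2) (h2' : #O' = 2) :
    2 * ∑ j, 2 / #(BO j) * (incidenceCount B (BO j) x * incidenceCount B (BO j) y) =
      ∑ u ∈ O, ∑ v ∈ O', #{a | u ∈ B a ∧ v ∈ B a} := by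
  rw [← sum_card_inter_mul_card_inter, sum_eq_sum_sum_of_cover BO hcov hdisj, mul_sum]
  refine sum_congr rfl fun j _ => ?_
  obtain ⟨a, ha⟩ := hBO j
  have hj := card_mul_sum_card_inter_mul_card_inter hB hO hO' ha
  rw [h2, h2'] at hj
  rcases hsize j with h | h <;> rw [h] at hj ⊢ <;> omega

lemma card_filter_incidenceCount_eq_one_add [Fintype K] [DecidableEq K] {ι : Type*}
    [Fintype ι]     (hB : ∀ (g : G) a, B (g • a) = g • B a) (BO : ι → Finset K)
    (hBO : ∀ j, ∃ a, (BO j : Set K) = orbit G a) (hsize : ∀ j, #(BO j) = 1 ∨ #(BO j) = 2)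
    (hcov : ∀ a, ∃ j, a ∈ BO j) (hdisj : ∀ j j', j ≠ j' → Disjoint (BO j) (BO j')) {l r : ℕ}
    (hl : ∀ p p', p ≠ p' → #{a | p ∈ B a ∧ p' ∈ B a} = l) (hr : ∀ p, #{a | p ∈ B a} = r)
    {O : Finset P} {x : P} (hO : (O : Set P) = orbit G x) (h2 : #O = 2) :
    #{j | #(BO j) = 2 ∧ incidenceCount B (BO j) x = 1} + l = r := by
  have hsq := sum_two_div_mul_self_add_card (fun j => #(BO j))
    (fun j => incidenceCount B (BO j) x) hsize fun j => incidenceCount_le_card _ _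
  rw [sum_incidenceCount_eq_card BO hcov hdisj, hr] at hsq
  have hdiag := two_mul_sum_orbit_incidence_mul hB BO hBO hsize hcov hdisj hO hO h2 h2
  rw [sum_sum_card_filter_self _ hl hr, h2] at hdiag
  omega

lemma sum_incidenceCount_mul_eq_zero [Fintype K] [DecidableEq K] {ι : Type*} [Fintype ι]
    (hB : ∀ (g : G) a, B (g • a) = g • B a) (BO : ι → Finset K)
    (hBO : ∀ j, ∃ a, (BO j : Set K) = orbit G a) (hsize : ∀ j, #(BO j) = 1 ∨ #(BO j) = 2)
    (hcov : ∀ a, ∃ j, a ∈ BO j) (hdisj : ∀ j j', j ≠ j' → Disjoint (BO j) (BO j')) {l r : ℕ}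
    (hl : ∀ p p', p ≠ p' → #{a | p ∈ B a ∧ p' ∈ B a} = l) (hr : ∀ p, #{a | p ∈ B a} = r)
    (hrl : 2 ∣ r + l) {O O' : Finset P} {x y : P} (hO : (O : Set P) = orbit G x)
    (hO' : (O' : Set P) = orbit G y) (h2 : #O = 2) (h2' : #O' = 2)
    (hOO' : O = O' ∨ Disjoint O O') :
    ∑ j : {j // #(BO j) = 2},
      (incidenceCount B (BO j) x : ZMod 2) * incidenceCount B (BO j) y = 0 := by
  have hsum := natCast_sum_two_div_mul (fun j => #(BO j))
    (fun j => incidenceCount B (BO j) x * incidenceCount B (BO j) y) hsize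
  simp only [Nat.cast_mul] at hsum
  rw [← hsum, ZMod.natCast_eq_zero_iff]
  have hident := two_mul_sum_orbit_incidence_mul hB BO hBO hsize hcov hdisj hO hO' h2 h2'
  rcases hOO' with rfl | hdisjO
  · rw [sum_sum_card_filter_self _ hl hr, h2] at hident
    omega
  · rw [sum_sum_card_filter_of_disjoint hdisjO hl, h2, h2'] at hident
    omega

end OrbitCounting

lemma replication_eq_lambda_add_of_eq_two_mul {q t : ℕ} (hq : q = 2 * t) (ht : 1 ≤ t) :
    q * (q ^ 3 - 1) / 2 = q * (q ^ 3 - q ^ 2 - 2) / 4 + 2 * (t ^ 3 * (2 * t + 1)) := by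
  subst hq
  have ht2 : 2 * t ^ 2 + 1 ≤ 4 * t ^ 3 := by nlinarith [Nat.one_le_pow 2 t ht]
  have hq3 : (2 * t) ^ 2 + 2 ≤ (2 * t) ^ 3 := by nlinarith
  have hl :
      2 * t * ((2 * t) ^ 3 - (2 * t) ^ 2 - 2) = 4 * (t * (4 * t ^ 3 - 2 * t ^ 2 - 1)) := by
    zify [(by omega : 2 * t ^ 2 ≤ 4 * t ^ 3), (by omega : 1 ≤ 4 * t ^ 3 - 2 * t ^ 2),
      (by omega : (2 * t) ^ 2 ≤ (2 * t) ^ 3), (by omega : 2 ≤ (2 * t) ^ 3 - (2 * t) ^ 2)]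
    ring
  have hr : 2 * t * ((2 * t) ^ 3 - 1) =
      2 * (t * (4 * t ^ 3 - 2 * t ^ 2 - 1) + 2 * (t ^ 3 * (2 * t + 1))) := by
    zify [(by omega : 2 * t ^ 2 ≤ 4 * t ^ 3), (by omega : 1 ≤ 4 * t ^ 3 - 2 * t ^ 2),
      (by omega : 1 ≤ (2 * t) ^ 3)]
    ring
  rw [hl, hr, Nat.mul_div_cancel_left _ two_pos, Nat.mul_div_cancel_left _ four_pos]

lemma exists_replication_eq_lambda_add_two_mul {q m : ℕ} (hm : 1 ≤ m) (hq : q = 2 ^ m) :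
    ∃ d, q * (q ^ 3 - 1) / 2 = q * (q ^ 3 - q ^ 2 - 2) / 4 + 2 * d ∧ (4 ≤ q → 2 ∣ d) := by
  obtain ⟨k, rfl⟩ : ∃ k, m = k + 1 := ⟨m - 1, by omega⟩
  refine ⟨_, replication_eq_lambda_add_of_eq_two_mul (hq.trans (pow_succ' 2 k))
    Nat.one_le_two_pow, fun h4 => ?_⟩
  have hk : k ≠ 0 := by
    rintro rfl
    omega
  exact (dvd_pow (dvd_pow_self 2 hk) three_ne_zero).mul_right _

theorem stmt16_general (mq q b m n : ℕ) (hm : 1 ≤ mq) (hq : q = 2 ^ mq)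
    (B : Fin b → Finset (Fin (q ^ 3)))
    (hlam : ∀ p p' : Fin (q ^ 3), p ≠ p' →
      (Finset.univ.filter (fun a => p ∈ B a ∧ p' ∈ B a)).card =
        q * (q ^ 3 - q ^ 2 - 2) / 4)
    (hr : ∀ p : Fin (q ^ 3),
      (Finset.univ.filter (fun a => p ∈ B a)).card = q * (q ^ 3 - 1) / 2)
    (G : Subgroup (Equiv.Perm (Fin (q ^ 3))))
    (σ : G →* Equiv.Perm (Fin b))
    (hσ : ∀ (g : G) (a : Fin b),
      B (σ g a) = (B a).image (g : Equiv.Perm (Fin (q ^ 3))))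
    (PO : Fin m → Finset (Fin (q ^ 3)))
    (hPOorb : ∀ i, ∃ pt, ∀ p, p ∈ PO i ↔ ∃ g : G, (g : Equiv.Perm (Fin (q ^ 3))) pt = p)
    (hPOdisj : ∀ i i', i ≠ i' → Disjoint (PO i) (PO i'))
    (BO : Fin n → Finset (Fin b))
    (hBOorb : ∀ j, ∃ a, ∀ c, c ∈ BO j ↔ ∃ g : G, σ g a = c)
    (hBOcov : ∀ a, ∃ j, a ∈ BO j)
    (hBOdisj : ∀ j j', j ≠ j' → Disjoint (BO j) (BO j'))
    (hBOsize : ∀ j, (BO j).card = 1 ∨ (BO j).card = 2)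
    (rep : Fin m → Fin (q ^ 3)) (hrep : ∀ i, rep i ∈ PO i)
    (rowNF : {i : Fin m // (PO i).card = 2} →
      ({j : Fin n // (BO j).card = 2} → ZMod 2))
    (hrow : ∀ i j, rowNF i j =
      (((BO j.1).filter (fun a => rep i.1 ∈ B a)).card : ZMod 2)) :
    (∀ u ∈ Submodule.span (ZMod 2) (Set.range rowNF),
      ∀ w ∈ Submodule.span (ZMod 2) (Set.range rowNF), ∑ j, u j * w j = 0) ∧
    (4 ≤ q → ∀ u ∈ Submodule.span (ZMod 2) (Set.range rowNF), 4 ∣ hammingNorm u) := by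
  classical
  let _ : MulAction G (Fin b) := MulAction.compHom _ σ
  have hB : ∀ (g : G) a, B (g • a) = g • B a := hσ
  have hPO : ∀ i, (PO i : Set (Fin (q ^ 3))) = orbit G (rep i) := fun i =>
    (hPOorb i).elim fun _ h => coe_eq_orbit_of_mem (Set.ext h) (hrep i)
  have hBO : ∀ j, ∃ a, (BO j : Set (Fin b)) = orbit G a := fun j =>
    (hBOorb j).imp fun _ h => Set.ext h
  obtain ⟨d, hrl, hd⟩ := exists_replication_eq_lambda_add_two_mul hm hq
  have hrows : ∀ i, rowNF i = fun j => (incidenceCount B (BO j.1) (rep i.1) : ZMod 2) :=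
    fun i => funext (hrow i)
  have horth : ∀ i s, rowNF i ⬝ᵥ rowNF s = 0 := fun i s => by
    simp only [hrows, dotProduct]
    refine sum_incidenceCount_mul_eq_zero hB BO hBO hBOsize hBOcov hBOdisj hlam hr (by omega)
      (hPO i) (hPO s) i.2 s.2 ?_
    exact (eq_or_ne i.1 s.1).imp (congrArg PO) (hPOdisj _ _)
  have hweight : 4 ≤ q → ∀ i, 4 ∣ hammingNorm (rowNF i) := by
    intro hq4 i
    rw [hrows, hammingNorm_natCast_eq_card (c := fun j => #(BO j))
      (γ := fun j => incidenceCount B (BO j) (rep i))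
      fun j hj => (incidenceCount_le_card _ _).trans hj.le]
    have hones := card_filter_incidenceCount_eq_one_add hB BO hBO hBOsize hBOcov hBOdisj hlam hr
      (hPO i) i.2
    have := hd hq4
    omega
  have hgen : ∀ x ∈ Set.range rowNF, ∀ y ∈ Set.range rowNF, x ⬝ᵥ y = 0 := by
    rintro _ ⟨i, rfl⟩ _ ⟨s, rfl⟩
    exact horth i s
  exact ⟨fun u hu w hw => dotProduct_eq_zero_of_mem_span hgen hu hw, fun hq4 u hu =>
    four_dvd_hammingNorm_of_mem_span hgen (by rintro _ ⟨i, rfl⟩; exact hweight hq4 i) hu⟩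

/-- Let `D` be a quasi-symmetric design of Blokhuis–Haemers type with parameters
2-(q³, q²(q−1)/2, q(q³−q²−2)/4), `q` a power of 2 with `q ≥ 2`, and let `G` be an
automorphism group acting with some fixed points, some fixed blocks and all other
orbits of size 2. Then the binary code spanned by the rows of the non-fixed part of
the point orbit matrix is self-orthogonal; moreover, if `q ≥ 4` it is doubly even. -/
theorem stmt16 (mq q b m n : ℕ) (hm : 1 ≤ mq) (hq : q = 2 ^ mq)
    (B : Fin b → Finset (Fin (q ^ 3)))
    (hk : ∀ a, (B a).card = q ^ 2 * (q - 1) / 2)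
    (hlam : ∀ p p' : Fin (q ^ 3), p ≠ p' →
      (Finset.univ.filter (fun a => p ∈ B a ∧ p' ∈ B a)).card =
        q * (q ^ 3 - q ^ 2 - 2) / 4)
    (hr : ∀ p : Fin (q ^ 3),
      (Finset.univ.filter (fun a => p ∈ B a)).card = q * (q ^ 3 - 1) / 2)
    (hqs : ∀ a a', a ≠ a' →
      (B a ∩ B a').card = q ^ 2 * (q - 2) / 4 ∨
        (B a ∩ B a').card = q ^ 2 * (q - 1) / 4)
    (G : Subgroup (Equiv.Perm (Fin (q ^ 3))))
    (σ : G →* Equiv.Perm (Fin b))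
    (hσ : ∀ (g : G) (a : Fin b),
      B (σ g a) = (B a).image (g : Equiv.Perm (Fin (q ^ 3))))
    (PO : Fin m → Finset (Fin (q ^ 3)))
    (hPOorb : ∀ i, ∃ pt, ∀ p, p ∈ PO i ↔ ∃ g : G, (g : Equiv.Perm (Fin (q ^ 3))) pt = p)
    (hPOcov : ∀ pt, ∃ i, pt ∈ PO i)
    (hPOdisj : ∀ i i', i ≠ i' → Disjoint (PO i) (PO i'))
    (hPOsize : ∀ i, (PO i).card = 1 ∨ (PO i).card = 2)
    (BO : Fin n → Finset (Fin b))
    (hBOorb : ∀ j, ∃ a, ∀ c, c ∈ BO j ↔ ∃ g : G, σ g a = c)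
    (hBOcov : ∀ a, ∃ j, a ∈ BO j)
    (hBOdisj : ∀ j j', j ≠ j' → Disjoint (BO j) (BO j'))
    (hBOsize : ∀ j, (BO j).card = 1 ∨ (BO j).card = 2)
    (rep : Fin m → Fin (q ^ 3)) (hrep : ∀ i, rep i ∈ PO i)
    (rowNF : {i : Fin m // (PO i).card = 2} →
      ({j : Fin n // (BO j).card = 2} → ZMod 2))
    (hrow : ∀ i j, rowNF i j =
      (((BO j.1).filter (fun a => rep i.1 ∈ B a)).card : ZMod 2)) :
    (∀ u ∈ Submodule.span (ZMod 2) (Set.range rowNF),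
      ∀ w ∈ Submodule.span (ZMod 2) (Set.range rowNF), ∑ j, u j * w j = 0) ∧
    (4 ≤ q → ∀ u ∈ Submodule.span (ZMod 2) (Set.range rowNF), 4 ∣ hammingNorm u) :=
  stmt16_general mq q b m n hm hq B hlam hr G σ hσ PO hPOorb hPOdisj BO hBOorb hBOcov hBOdisj
    hBOsize rep hrep rowNF hrow
end

section
/- Let v_1, k_1, λ_1, v_2, k_2, λ_2 be design parameters with v_2 = v_1·k_2, and set r_i = λ_i(v_i−1)/(k_i−1) for i = 1,2. Given a 2-(v_1,k_1,λ_1) design D_1 and a resolvable 2-(v_2,k_2,λ_2) design D_2, the incidence structure whose points are the points of D_2 and whose blocks are, for each parallel class P of D_2 (with blocks of P labeled by points of D_1) and each block B of D_1, the union of the k_1 blocks of P labeled by points of B, is a 2-design with parameters v = v_1·k_2, k = k_1·k_2, λ = r_1·λ_2 + λ_1·(r_2 − λ_2). -/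
/-!
Let `p ≠ p'` be points of `D₂`. In a parallel class `t` they lie in blocks with labels `u`, `u'`,
and the new block `(t, a)` contains both exactly when `u, u' ∈ B₁ a`; since labels are injective
on a class, there are `r₁` such `a` when `p, p'` share their block of class `t` and `λ₁` otherwise.
Every point lies in exactly one block of each class, so there are `r₂` classes, and `p, p'` share a
block in exactly `λ₂` of them. The block size `k₁ k₂` holds because the new block is a disjoint
union of `k₁` blocks of one class.
-/

open Finset

def IsResolution {P ι T : Type*} (B : ι → Finset P) (cls : ι → T) : Prop :=
  ∀ t p, ∃! j, cls j = t ∧ p ∈ B j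

def IsClassLabelling {ι T U : Type*} (cls : ι → T) (lab : ι → U) : Prop :=
  ∀ t u, ∃! j, cls j = t ∧ lab j = u

namespace IsResolution

variable {P ι T : Type*} {B : ι → Finset P} {cls : ι → T}

noncomputable def classBlock (h : IsResolution B cls) (t : T) (p : P) : ι :=
  (h t p).exists.choose

theorem cls_classBlock (h : IsResolution B cls) (t : T) (p : P) : cls (h.classBlock t p) = t :=
  (h t p).exists.choose_spec.1

theorem mem_classBlock (h : IsResolution B cls) (t : T) (p : P) : p ∈ B (h.classBlock t p) :=
  (h t p).exists.choose_spec.2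

theorem eq_classBlock (h : IsResolution B cls) {t : T} {p : P} {j : ι} (hj : cls j = t)
    (hp : p ∈ B j) : j = h.classBlock t p :=
  (h t p).unique ⟨hj, hp⟩ ⟨h.cls_classBlock t p, h.mem_classBlock t p⟩

theorem disjoint_of_cls_eq (h : IsResolution B cls) {j j' : ι} (hcls : cls j = cls j')
    (hne : j ≠ j') : Disjoint (B j) (B j') :=
  disjoint_left.2 fun _ hp hp' =>
    hne <| (h.eq_classBlock rfl hp).trans (h.eq_classBlock hcls.symm hp').symm

variable [Fintype ι] [Fintype T] [DecidableEq P]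

theorem card_classes_eq_card_filter_mem (h : IsResolution B cls) (p : P) :
    Fintype.card T = #{j | p ∈ B j} :=
  card_nbij' (h.classBlock · p) cls (fun t _ => by simp [h.mem_classBlock])
    (fun _ _ => mem_coe.2 (mem_univ _)) (fun t _ => h.cls_classBlock t p)
    (fun _ hj => (h.eq_classBlock rfl (mem_filter.1 hj).2).symm)

theorem card_filter_classBlock_eq_eq [DecidableEq ι] (h : IsResolution B cls) (p p' : P) :
    #{t | h.classBlock t p = h.classBlock t p'} = #{j | p ∈ B j ∧ p' ∈ B j} := by
  refine card_nbij' (h.classBlock · p) cls (fun t ht => ?_) (fun j hj => ?_)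
    (fun t _ => h.cls_classBlock t p) (fun j hj => ?_)
  · simp only [coe_filter, mem_univ, true_and, Set.mem_ofPred_eq] at ht ⊢
    exact ⟨h.mem_classBlock t p, ht ▸ h.mem_classBlock t p'⟩
  · simp only [coe_filter, mem_univ, true_and, Set.mem_ofPred_eq] at hj ⊢
    rw [← h.eq_classBlock rfl hj.1, ← h.eq_classBlock rfl hj.2]
  · simp only [coe_filter, mem_univ, true_and, Set.mem_ofPred_eq] at hj
    exact (h.eq_classBlock rfl hj.1).symm

end IsResolution

namespace IsClassLabelling

variable {ι T U : Type*} {cls : ι → T} {lab : ι → U}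

theorem eq_of_lab_eq (hl : IsClassLabelling cls lab) {j j' : ι} (hcls : cls j = cls j')
    (hlab : lab j = lab j') : j = j' :=
  (hl (cls j') (lab j')).unique ⟨hcls, hlab⟩ ⟨rfl, rfl⟩

theorem card_filter_lab_mem [Fintype ι] [DecidableEq T] [DecidableEq U]
    (hl : IsClassLabelling cls lab) (t : T) (S : Finset U) : #{j | cls j = t ∧ lab j ∈ S} = #S := by
  refine card_nbij lab (fun j hj => (mem_filter.1 hj).2.2) (fun j hj j' hj' he => ?_)
    (fun u hu => ?_)
  · exact hl.eq_of_lab_eq (((mem_filter.1 hj).2.1).trans (mem_filter.1 hj').2.1.symm) he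
  · obtain ⟨j, ⟨hj, rfl⟩, -⟩ := hl t u
    exact ⟨j, by simpa [hj] using hu, rfl⟩

end IsClassLabelling

theorem card_filter_mem_mem_eq_ite {U A : Type*} [Fintype A] [DecidableEq U] {B : A → Finset U}
    {r lam : ℕ} (hlam : ∀ u u', u ≠ u' → #{a | u ∈ B a ∧ u' ∈ B a} = lam)
    (hr : ∀ u, #{a | u ∈ B a} = r) (u u' : U) :
    #{a | u ∈ B a ∧ u' ∈ B a} = if u = u' then r else lam := by
  split_ifs with huu'
  · simp [← hr u, huu']
  · exact hlam u u' huu'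

section Composition

variable {U A P ι T : Type*} [Fintype P] [DecidableEq P] [Fintype ι] [DecidableEq T]
  [DecidableEq U] (B1 : A → Finset U) (B2 : ι → Finset P) (cls : ι → T) (lab : ι → U)

def composedBlock (w : T × A) : Finset P :=
  {p | ∃ j, cls j = w.1 ∧ p ∈ B2 j ∧ lab j ∈ B1 w.2}

variable {B1 B2 cls lab}

theorem mem_composedBlock_iff (h : IsResolution B2 cls) {w : T × A} {p : P} :
    p ∈ composedBlock B1 B2 cls lab w ↔ lab (h.classBlock w.1 p) ∈ B1 w.2 := by
  simp only [composedBlock, mem_filter, mem_univ, true_and]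
  constructor
  · rintro ⟨j, hj, hp, hl⟩
    rwa [← h.eq_classBlock hj hp]
  · exact fun hl => ⟨_, h.cls_classBlock _ _, h.mem_classBlock _ _, hl⟩

theorem card_composedBlock [DecidableEq ι] {k : ℕ} (h : IsResolution B2 cls)
    (hl : IsClassLabelling cls lab) (hk : ∀ j, #(B2 j) = k) (w : T × A) :
    #(composedBlock B1 B2 cls lab w) = #(B1 w.2) * k := by
  have hunion : composedBlock B1 B2 cls lab w =
      ({j | cls j = w.1 ∧ lab j ∈ B1 w.2} : Finset ι).biUnion B2 := by
    ext p
    simp only [composedBlock, mem_filter, mem_univ, true_and, mem_biUnion]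
    exact ⟨fun ⟨j, hj, hp, hl⟩ => ⟨j, ⟨hj, hl⟩, hp⟩, fun ⟨j, ⟨hj, hl⟩, hp⟩ => ⟨j, hj, hp, hl⟩⟩
  rw [hunion, card_biUnion, sum_congr rfl fun j _ => hk j, sum_const, smul_eq_mul,
    hl.card_filter_lab_mem]
  intro j hj j' hj' hne
  exact h.disjoint_of_cls_eq ((mem_filter.1 hj).2.1.trans (mem_filter.1 hj').2.1.symm) hne

theorem card_filter_mem_composedBlock_mem [DecidableEq ι] [Fintype T] [Fintype A]
    {r1 lam1 r2 lam2 : ℕ} (h : IsResolution B2 cls) (hl : IsClassLabelling cls lab)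
    (hlam1 : ∀ u u', u ≠ u' → #{a | u ∈ B1 a ∧ u' ∈ B1 a} = lam1)
    (hr1 : ∀ u, #{a | u ∈ B1 a} = r1)
    (hlam2 : ∀ p p', p ≠ p' → #{j | p ∈ B2 j ∧ p' ∈ B2 j} = lam2)
    (hr2 : ∀ p, #{j | p ∈ B2 j} = r2) {p p' : P} (hpp' : p ≠ p') :
    #{w | p ∈ composedBlock B1 B2 cls lab w ∧ p' ∈ composedBlock B1 B2 cls lab w} =
      r1 * lam2 + lam1 * (r2 - lam2) := by
  set J := h.classBlock
  have hsame : #{t | J t p = J t p'} = lam2 := (h.card_filter_classBlock_eq_eq p p').trans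
    (hlam2 p p' hpp')
  have hdiff : #{t | ¬J t p = J t p'} = r2 - lam2 := by
    have := card_filter_add_card_filter_not (s := univ) (fun t => J t p = J t p')
    rw [card_univ, h.card_classes_eq_card_filter_mem p, hr2, hsame] at this
    omega
  calc #{w | p ∈ composedBlock B1 B2 cls lab w ∧ p' ∈ composedBlock B1 B2 cls lab w}
      = ∑ t, #{a | lab (J t p) ∈ B1 a ∧ lab (J t p') ∈ B1 a} := by
        simp only [card_filter, Fintype.sum_prod_type, mem_composedBlock_iff h, J]
    _ = ∑ t, if J t p = J t p' then r1 else lam1 := by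
        refine sum_congr rfl fun t _ => ?_
        rw [card_filter_mem_mem_eq_ite hlam1 hr1]
        have hinj : lab (J t p) = lab (J t p') ↔ J t p = J t p' :=
          ⟨hl.eq_of_lab_eq ((h.cls_classBlock t p).trans (h.cls_classBlock t p').symm),
            congrArg lab⟩
        simp only [hinj]
    _ = r1 * lam2 + lam1 * (r2 - lam2) := by
        rw [sum_ite, sum_const, sum_const, hsame, hdiff, smul_eq_mul, smul_eq_mul, mul_comm,
          mul_comm (r2 - lam2)]

end Composition

theorem stmt18_general (v1 b1 k1 lam1 r1 v2 b2 k2 lam2 r2 c : ℕ)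
    (B1 : Fin b1 → Finset (Fin v1))
    (hk1 : ∀ a, (B1 a).card = k1)
    (hlam1 : ∀ u u' : Fin v1, u ≠ u' →
      (Finset.univ.filter (fun a => u ∈ B1 a ∧ u' ∈ B1 a)).card = lam1)
    (hr1 : ∀ u : Fin v1, (Finset.univ.filter (fun a => u ∈ B1 a)).card = r1)
    (B2 : Fin b2 → Finset (Fin v2))
    (hk2 : ∀ j, (B2 j).card = k2)
    (hlam2 : ∀ p p' : Fin v2, p ≠ p' →
      (Finset.univ.filter (fun j => p ∈ B2 j ∧ p' ∈ B2 j)).card = lam2)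
    (hr2 : ∀ p : Fin v2, (Finset.univ.filter (fun j => p ∈ B2 j)).card = r2)
    (cls : Fin b2 → Fin c)
    (hres : ∀ (t : Fin c) (p : Fin v2), ∃! j, cls j = t ∧ p ∈ B2 j)
    (lab : Fin b2 → Fin v1)
    (hlab : ∀ (t : Fin c) (u : Fin v1), ∃! j, cls j = t ∧ lab j = u)
    (NB : Fin c × Fin b1 → Finset (Fin v2))
    (hNB : ∀ w, NB w =
      Finset.univ.filter (fun p => ∃ j, cls j = w.1 ∧ p ∈ B2 j ∧ lab j ∈ B1 w.2)) :
    (∀ w, (NB w).card = k1 * k2) ∧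
    (∀ p p' : Fin v2, p ≠ p' →
      (Finset.univ.filter (fun w : Fin c × Fin b1 => p ∈ NB w ∧ p' ∈ NB w)).card =
        r1 * lam2 + lam1 * (r2 - lam2)) := by
  -- `hNB` decides its existential by `Nat.decidableExistsFin`, so it matches `composedBlock`
  -- only up to the `Decidable` instance.
  obtain rfl : NB = composedBlock B1 B2 cls lab := by
    ext w p
    simp [hNB, composedBlock]
  refine ⟨fun w => ?_, fun p p' hpp' => ?_⟩
  · rw [card_composedBlock hres hlab hk2, hk1]
  · exact card_filter_mem_composedBlock_mem hres hlab hlam1 hr1 hlam2 hr2 hpp'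

/-- Shrikhande–Raghavarao construction: given a 2-(v₁,k₁,λ₁) design `D₁` and a
resolvable 2-(v₂,k₂,λ₂) design `D₂` with `v₂ = v₁·k₂` (parallel classes indexed by
`Fin c`, blocks of each class labeled bijectively by the points of `D₁`), the
structure whose blocks are, for each parallel class `t` and each block `a` of `D₁`,
the union of the blocks of class `t` labeled by the points of `B₁ a`, is a 2-design
with `v = v₁·k₂`, block size `k = k₁·k₂` and `λ = r₁·λ₂ + λ₁·(r₂ − λ₂)`. -/
theorem stmt18 (v1 b1 k1 lam1 r1 v2 b2 k2 lam2 r2 c : ℕ)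
    (hv : v2 = v1 * k2)
    (B1 : Fin b1 → Finset (Fin v1))
    (hk1 : ∀ a, (B1 a).card = k1)
    (hlam1 : ∀ u u' : Fin v1, u ≠ u' →
      (Finset.univ.filter (fun a => u ∈ B1 a ∧ u' ∈ B1 a)).card = lam1)
    (hr1 : ∀ u : Fin v1, (Finset.univ.filter (fun a => u ∈ B1 a)).card = r1)
    (B2 : Fin b2 → Finset (Fin v2))
    (hk2 : ∀ j, (B2 j).card = k2)
    (hlam2 : ∀ p p' : Fin v2, p ≠ p' →
      (Finset.univ.filter (fun j => p ∈ B2 j ∧ p' ∈ B2 j)).card = lam2)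
    (hr2 : ∀ p : Fin v2, (Finset.univ.filter (fun j => p ∈ B2 j)).card = r2)
    (cls : Fin b2 → Fin c)
    (hres : ∀ (t : Fin c) (p : Fin v2), ∃! j, cls j = t ∧ p ∈ B2 j)
    (lab : Fin b2 → Fin v1)
    (hlab : ∀ (t : Fin c) (u : Fin v1), ∃! j, cls j = t ∧ lab j = u)
    (NB : Fin c × Fin b1 → Finset (Fin v2))
    (hNB : ∀ w, NB w =
      Finset.univ.filter (fun p => ∃ j, cls j = w.1 ∧ p ∈ B2 j ∧ lab j ∈ B1 w.2)) :
    (∀ w, (NB w).card = k1 * k2) ∧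
    (∀ p p' : Fin v2, p ≠ p' →
      (Finset.univ.filter (fun w : Fin c × Fin b1 => p ∈ NB w ∧ p' ∈ NB w)).card =
        r1 * lam2 + lam1 * (r2 - lam2)) :=
  stmt18_general v1 b1 k1 lam1 r1 v2 b2 k2 lam2 r2 c B1 hk1 hlam1 hr1 B2 hk2 hlam2 hr2 cls hres lab
    hlab NB hNB
end
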